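/- Let a > b > 0. For any triangle P₁P₂P₃ inscribed in the circle of radius a + b centered at the origin whose three side lines are each tangent to the concentric ellipse x²/a² + y²/b² = 1 (i.e., each side lies on a line {(x,y) : p·x + q·y = 1} with a²p² + b²q² = 1), the sum of the squares of the cosines of its three interior angles equals (a² + a*b + b²)/(a+b)², i.e. equals 1 − 2·k' where k' = a*b/(2*(a+b)²). -/

import Mathlib

/-!
By the law of sines, `cos² A = 1 - BC² / (2R)²` in a triangle with circumradius `R`, and when the
vertices `pᵢ` lie on a circle of radius `R` about `O`, the squared sides add up to
`9R² - ‖Σ (pᵢ - O)‖²`. Hence `Σ cos² = (3R² + ‖Σ (pᵢ - O)‖²) / (4R²)`, and with `O = 0`,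
`R = a + b` the claim amounts to `‖P₁ + P₂ + P₃‖ = a - b`: the orthocentre `P₁ + P₂ + P₃` lies on
the circle of radius `a - b`.

A chord `PQ` of the circle of radius `a + b` tangent to the ellipse satisfies
`b x_P x_Q + a y_P y_Q = -ab(a + b)`. So `P₂` and `P₃` both lie on the line
`b x₁ x + a y₁ y = -ab(a + b)`, which depends on `P₁` alone; the midpoint of the chord `P₂P₃` is the
foot of the perpendicular from the origin to that line, and this determines `P₂ + P₃`.
-/

open EuclideanGeometry

/-- The line through `P` and `Q` is tangent to the ellipse `x²/a² + y²/b² = 1`: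
it lies on a line `{(x,y) : p·x + q·y = 1}` with `a²p² + b²q² = 1`. -/
def SideTangentToEllipse (a b : ℝ) (P Q : EuclideanSpace ℝ (Fin 2)) : Prop :=
  ∃ p q : ℝ, a ^ 2 * p ^ 2 + b ^ 2 * q ^ 2 = 1 ∧
    p * P 0 + q * P 1 = 1 ∧ p * Q 0 + q * Q 1 = 1

theorem norm_sub_sq_add_norm_sub_sq_add_norm_sub_sq {V : Type*} [NormedAddCommGroup V]
    [InnerProductSpace ℝ V] (x y z : V) :
    ‖x - y‖ ^ 2 + ‖y - z‖ ^ 2 + ‖x - z‖ ^ 2 =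
      3 * (‖x‖ ^ 2 + ‖y‖ ^ 2 + ‖z‖ ^ 2) - ‖x + y + z‖ ^ 2 := by
  simp only [norm_sub_sq_real, norm_add_sq_real, inner_add_left]
  ring

section Inscribed

variable {V P : Type*} [NormedAddCommGroup V] [InnerProductSpace ℝ V] [MetricSpace P]
  [NormedAddTorsor V P]

namespace Affine.Triangle

theorem cos_sq_angle (t : Triangle ℝ P) {i₁ i₂ i₃ : Fin 3}
    (h₁₂ : i₁ ≠ i₂) (h₁₃ : i₁ ≠ i₃) (h₂₃ : i₂ ≠ i₃) :
    Real.cos (∠ (t.points i₁) (t.points i₂) (t.points i₃)) ^ 2 =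
      1 - dist (t.points i₁) (t.points i₃) ^ 2 / (2 * t.circumradius) ^ 2 := by
  have hsine := t.dist_div_sin_angle_eq_two_mul_circumradius h₁₂ h₁₃ h₂₃
  have hr : 2 * t.circumradius ≠ 0 := by positivity [t.circumradius_pos]
  have hsin_ne : Real.sin (∠ (t.points i₁) (t.points i₂) (t.points i₃)) ≠ 0 := by
    intro h
    rw [h, div_zero] at hsine
    exact hr hsine.symm
  have hsin : Real.sin (∠ (t.points i₁) (t.points i₂) (t.points i₃)) =
      dist (t.points i₁) (t.points i₃) / (2 * t.circumradius) := by
    rw [eq_div_iff hr, ← hsine]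
    field_simp
  rw [Real.cos_sq', hsin, div_pow]

theorem sum_cos_sq_angle (t : Triangle ℝ P) :
    Real.cos (∠ (t.points 1) (t.points 0) (t.points 2)) ^ 2 +
      Real.cos (∠ (t.points 0) (t.points 1) (t.points 2)) ^ 2 +
      Real.cos (∠ (t.points 0) (t.points 2) (t.points 1)) ^ 2 =
    (3 * t.circumradius ^ 2 + ‖∑ i, (t.points i -ᵥ t.circumcenter)‖ ^ 2) /
      (4 * t.circumradius ^ 2) := by
  have hr : t.circumradius ≠ 0 := t.circumradius_pos.ne'
  have hdist : ∀ i j, dist (t.points i) (t.points j) =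
      ‖(t.points i -ᵥ t.circumcenter) - (t.points j -ᵥ t.circumcenter)‖ := by
    intro i j
    rw [vsub_sub_vsub_cancel_right, dist_eq_norm_vsub V]
  have hnorm : ∀ i, ‖t.points i -ᵥ t.circumcenter‖ = t.circumradius := by
    intro i
    rw [← dist_eq_norm_vsub V, t.dist_circumcenter_eq_circumradius]
  have hsides := norm_sub_sq_add_norm_sub_sq_add_norm_sub_sq (t.points 0 -ᵥ t.circumcenter)
    (t.points 1 -ᵥ t.circumcenter) (t.points 2 -ᵥ t.circumcenter)
  rw [t.cos_sq_angle (by decide) (by decide) (by decide),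
    t.cos_sq_angle (by decide) (by decide) (by decide),
    t.cos_sq_angle (by decide) (by decide) (by decide), Fin.sum_univ_three]
  simp only [hdist, hnorm] at hsides ⊢
  field_simp
  linear_combination (-4 : ℝ) * hsides

end Affine.Triangle

theorem sum_cos_sq_angle_of_dist_eq [FiniteDimensional ℝ V] (hV : Module.finrank ℝ V = 2)
    {p₁ p₂ p₃ c : P} {r : ℝ} (hind : AffineIndependent ℝ ![p₁, p₂, p₃])
    (h₁ : dist p₁ c = r) (h₂ : dist p₂ c = r) (h₃ : dist p₃ c = r) :
    Real.cos (∠ p₂ p₁ p₃) ^ 2 + Real.cos (∠ p₁ p₂ p₃) ^ 2 + Real.cos (∠ p₁ p₃ p₂) ^ 2 =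
      (3 * r ^ 2 + ‖(p₁ -ᵥ c) + (p₂ -ᵥ c) + (p₃ -ᵥ c)‖ ^ 2) / (4 * r ^ 2) := by
  let t : Affine.Triangle ℝ P := ⟨![p₁, p₂, p₃], hind⟩
  have hdist : ∀ i, dist (t.points i) c = r := by
    intro i
    fin_cases i <;> assumption
  have hc : c ∈ affineSpan ℝ (Set.range t.points) := by
    rw [hind.affineSpan_eq_top_iff_card_eq_finrank_add_one.2 (by simp [hV])]
    exact AffineSubspace.mem_top _ _ _
  have hsum := t.sum_cos_sq_angle
  rw [← t.eq_circumcenter_of_dist_eq hc hdist, ← t.eq_circumradius_of_dist_eq hc hdist,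
    Fin.sum_univ_three] at hsum
  exact hsum

end Inscribed

theorem chord_midpoint_eq_foot {p q c x₁ y₁ x₂ y₂ : ℝ} (hne : (x₁, y₁) ≠ (x₂, y₂))
    (hr : x₁ ^ 2 + y₁ ^ 2 = x₂ ^ 2 + y₂ ^ 2) (h₁ : p * x₁ + q * y₁ = c)
    (h₂ : p * x₂ + q * y₂ = c) :
    (p ^ 2 + q ^ 2) * (x₁ + x₂) = 2 * c * p ∧ (p ^ 2 + q ^ 2) * (y₁ + y₂) = 2 * c * q := by
  -- the nonzero vector `(x₁ - x₂, y₁ - y₂)` is orthogonal to both `(p, q)` and `(x₁ + x₂, y₁ + y₂)`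
  have hdet : p * (y₁ + y₂) - q * (x₁ + x₂) = 0 := by
    have hx : (x₁ - x₂) * (p * (y₁ + y₂) - q * (x₁ + x₂)) = 0 := by
      linear_combination (y₁ + y₂) * (h₁ - h₂) - q * hr
    have hy : (y₁ - y₂) * (p * (y₁ + y₂) - q * (x₁ + x₂)) = 0 := by
      linear_combination -(x₁ + x₂) * (h₁ - h₂) + p * hr
    by_contra hdet
    refine hne (Prod.ext ?_ ?_)
    · exact sub_eq_zero.mp ((mul_eq_zero.mp hx).resolve_right hdet)
    · exact sub_eq_zero.mp ((mul_eq_zero.mp hy).resolve_right hdet)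
  constructor
  · linear_combination p * (h₁ + h₂) - q * hdet
  · linear_combination q * (h₁ + h₂) + p * hdet

theorem tangent_chord_bilinear_eq {a b p q x₁ y₁ x₂ y₂ : ℝ} (hne : (x₁, y₁) ≠ (x₂, y₂))
    (h₁ : x₁ ^ 2 + y₁ ^ 2 = (a + b) ^ 2) (h₂ : x₂ ^ 2 + y₂ ^ 2 = (a + b) ^ 2)
    (htan : a ^ 2 * p ^ 2 + b ^ 2 * q ^ 2 = 1) (hl₁ : p * x₁ + q * y₁ = 1)
    (hl₂ : p * x₂ + q * y₂ = 1) :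
    b * (x₁ * x₂) + a * (y₁ * y₂) = -(a * b * (a + b)) := by
  obtain ⟨hx, hy⟩ := chord_midpoint_eq_foot hne (h₁.trans h₂.symm) hl₁ hl₂
  have hN : p ^ 2 + q ^ 2 ≠ 0 := by
    intro hN
    have hp : p = 0 := by nlinarith
    have hq : q = 0 := by nlinarith
    simp [hp, hq] at hl₁
  -- `x₁, x₂` are the roots of `(p² + q²) X² - 2 p X + 1 - q² (a + b)²`, and similarly for `y`
  have hxx : (p ^ 2 + q ^ 2) * (x₁ * x₂) = 1 - q ^ 2 * (a + b) ^ 2 := by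
    linear_combination x₁ * hx - q ^ 2 * h₁ + (1 - p * x₁ + q * y₁) * hl₁
  have hyy : (p ^ 2 + q ^ 2) * (y₁ * y₂) = 1 - p ^ 2 * (a + b) ^ 2 := by
    linear_combination y₁ * hy - p ^ 2 * h₁ + (1 - q * y₁ + p * x₁) * hl₁
  apply mul_left_cancel₀ hN
  linear_combination b * hxx + a * hyy - (a + b) * htan

theorem vertex_sum_sq_eq {a b x₁ y₁ x₂ y₂ x₃ y₃ : ℝ} (ha : 0 < a) (hb : 0 < b)
    (h₁ : x₁ ^ 2 + y₁ ^ 2 = (a + b) ^ 2) (h₂ : x₂ ^ 2 + y₂ ^ 2 = (a + b) ^ 2)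
    (h₃ : x₃ ^ 2 + y₃ ^ 2 = (a + b) ^ 2) (hne : (x₂, y₂) ≠ (x₃, y₃))
    (h₁₂ : b * (x₁ * x₂) + a * (y₁ * y₂) = -(a * b * (a + b)))
    (h₁₃ : b * (x₁ * x₃) + a * (y₁ * y₃) = -(a * b * (a + b))) :
    (x₁ + x₂ + x₃) ^ 2 + (y₁ + y₂ + y₃) ^ 2 = (a - b) ^ 2 := by
  obtain ⟨hx, hy⟩ := chord_midpoint_eq_foot (p := b * x₁) (q := a * y₁)
    (c := -(a * b * (a + b))) hne (h₂.trans h₃.symm) (by linear_combination h₁₂)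
    (by linear_combination h₁₃)
  have hN : (b * x₁) ^ 2 + (a * y₁) ^ 2 ≠ 0 := by
    intro hN
    obtain ⟨hx₁, hy₁⟩ := (add_eq_zero_iff_of_nonneg (sq_nonneg _) (sq_nonneg _)).1 hN
    rw [sq_eq_zero_iff, mul_eq_zero, or_iff_right hb.ne'] at hx₁
    rw [sq_eq_zero_iff, mul_eq_zero, or_iff_right ha.ne'] at hy₁
    rw [hx₁, hy₁] at h₁
    nlinarith
  apply mul_left_cancel₀ (pow_ne_zero 2 hN)
  set N := (b * x₁) ^ 2 + (a * y₁) ^ 2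
  set c := -(a * b * (a + b))
  linear_combination (2 * N * x₁ + N * (x₂ + x₃) + 2 * c * b * x₁) * hx +
    (2 * N * y₁ + N * (y₂ + y₃) + 2 * c * a * y₁) * hy + N * (N - 4 * a ^ 2 * b ^ 2) * h₁

theorem EuclideanSpace.real_norm_sq_eq_fin_two (P : EuclideanSpace ℝ (Fin 2)) :
    ‖P‖ ^ 2 = P 0 ^ 2 + P 1 ^ 2 := by
  rw [EuclideanSpace.real_norm_sq_eq, Fin.sum_univ_two]

theorem EuclideanSpace.sq_add_sq_of_norm_eq {P : EuclideanSpace ℝ (Fin 2)} {r : ℝ}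
    (h : ‖P‖ = r) : P 0 ^ 2 + P 1 ^ 2 = r ^ 2 := by
  rw [← EuclideanSpace.real_norm_sq_eq_fin_two, h]

theorem EuclideanSpace.coords_ne_fin_two {P Q : EuclideanSpace ℝ (Fin 2)} (h : P ≠ Q) :
    (P 0, P 1) ≠ (Q 0, Q 1) := by
  intro hPQ
  obtain ⟨h0, h1⟩ := Prod.ext_iff.1 hPQ
  exact h (by ext i; fin_cases i <;> assumption)

theorem SideTangentToEllipse.bilinear_eq {a b : ℝ} {P Q : EuclideanSpace ℝ (Fin 2)}
    (h : SideTangentToEllipse a b P Q) (hP : ‖P‖ = a + b) (hQ : ‖Q‖ = a + b) (hPQ : P ≠ Q) :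
    b * (P 0 * Q 0) + a * (P 1 * Q 1) = -(a * b * (a + b)) := by
  obtain ⟨p, q, htan, hlP, hlQ⟩ := h
  exact tangent_chord_bilinear_eq (EuclideanSpace.coords_ne_fin_two hPQ)
    (EuclideanSpace.sq_add_sq_of_norm_eq hP) (EuclideanSpace.sq_add_sq_of_norm_eq hQ)
    htan hlP hlQ

theorem norm_vertex_sum_sq_eq {a b : ℝ} (ha : 0 < a) (hb : 0 < b)
    {P₁ P₂ P₃ : EuclideanSpace ℝ (Fin 2)} (hC₁ : ‖P₁‖ = a + b) (hC₂ : ‖P₂‖ = a + b)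
    (hC₃ : ‖P₃‖ = a + b) (h₁₂ : P₁ ≠ P₂) (h₂₃ : P₂ ≠ P₃) (h₃₁ : P₃ ≠ P₁)
    (ht₁₂ : SideTangentToEllipse a b P₁ P₂) (ht₃₁ : SideTangentToEllipse a b P₃ P₁) :
    ‖P₁ + P₂ + P₃‖ ^ 2 = (a - b) ^ 2 := by
  rw [EuclideanSpace.real_norm_sq_eq_fin_two]
  simp only [PiLp.add_apply]
  exact vertex_sum_sq_eq ha hb (EuclideanSpace.sq_add_sq_of_norm_eq hC₁)
    (EuclideanSpace.sq_add_sq_of_norm_eq hC₂) (EuclideanSpace.sq_add_sq_of_norm_eq hC₃)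
    (EuclideanSpace.coords_ne_fin_two h₂₃) (ht₁₂.bilinear_eq hC₁ hC₂ h₁₂)
    (by linear_combination ht₃₁.bilinear_eq hC₃ hC₁ h₃₁)

theorem circumcircle_family_sum_sq_cosines_general (a b : ℝ) (hb : 0 < b) (hab : b < a)
    (k' : ℝ) (hk' : k' = a * b / (2 * (a + b) ^ 2))
    (P₁ P₂ P₃ : EuclideanSpace ℝ (Fin 2))
    (hind : AffineIndependent ℝ ![P₁, P₂, P₃])
    (hC₁ : dist P₁ 0 = a + b) (hC₂ : dist P₂ 0 = a + b) (hC₃ : dist P₃ 0 = a + b)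
    (ht₁ : SideTangentToEllipse a b P₁ P₂)
    (ht₃ : SideTangentToEllipse a b P₃ P₁) :
    Real.cos (∠ P₂ P₁ P₃) ^ 2 + Real.cos (∠ P₁ P₂ P₃) ^ 2 + Real.cos (∠ P₁ P₃ P₂) ^ 2 =
      (a ^ 2 + a * b + b ^ 2) / (a + b) ^ 2 ∧
    Real.cos (∠ P₂ P₁ P₃) ^ 2 + Real.cos (∠ P₁ P₂ P₃) ^ 2 + Real.cos (∠ P₁ P₃ P₂) ^ 2 =
      1 - 2 * k' := by
  have ha : 0 < a := hb.trans hab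
  have hsum := sum_cos_sq_angle_of_dist_eq finrank_euclideanSpace_fin hind hC₁ hC₂ hC₃
  simp only [vsub_eq_sub, sub_zero] at hsum
  rw [dist_zero_right] at hC₁ hC₂ hC₃
  have h₁₂ : P₁ ≠ P₂ := by simpa using hind.injective.ne (show (0 : Fin 3) ≠ 1 by decide)
  have h₂₃ : P₂ ≠ P₃ := by simpa using hind.injective.ne (show (1 : Fin 3) ≠ 2 by decide)
  have h₃₁ : P₃ ≠ P₁ := by simpa using hind.injective.ne (show (2 : Fin 3) ≠ 0 by decide)
  have hS := norm_vertex_sum_sq_eq ha hb hC₁ hC₂ hC₃ h₁₂ h₂₃ h₃₁ ht₁ ht₃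
  have hR : a + b ≠ 0 := by linarith
  have hmain : Real.cos (∠ P₂ P₁ P₃) ^ 2 + Real.cos (∠ P₁ P₂ P₃) ^ 2 +
      Real.cos (∠ P₁ P₃ P₂) ^ 2 = (a ^ 2 + a * b + b ^ 2) / (a + b) ^ 2 := by
    rw [hsum, hS]
    field_simp
    ring
  refine ⟨hmain, hmain.trans ?_⟩
  rw [hk']
  field_simp
  ring

/-- For `a > b > 0`: any triangle of the circumcircle family (inscribed in the
circle of radius `a + b` centered at the origin, side lines tangent to the
concentric ellipse `x²/a² + y²/b² = 1`) has sum of squared interior-angle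
cosines equal to `(a² + ab + b²)/(a+b)²`, i.e. equal to `1 - 2k'` where
`k' = ab/(2(a+b)²)`. -/
theorem circumcircle_family_sum_sq_cosines (a b : ℝ) (hb : 0 < b) (hab : b < a)
    (k' : ℝ) (hk' : k' = a * b / (2 * (a + b) ^ 2))
    (P₁ P₂ P₃ : EuclideanSpace ℝ (Fin 2))
    (hind : AffineIndependent ℝ ![P₁, P₂, P₃])
    (hC₁ : dist P₁ 0 = a + b) (hC₂ : dist P₂ 0 = a + b) (hC₃ : dist P₃ 0 = a + b)
    (ht₁ : SideTangentToEllipse a b P₁ P₂)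
    (ht₂ : SideTangentToEllipse a b P₂ P₃)
    (ht₃ : SideTangentToEllipse a b P₃ P₁) :
    Real.cos (∠ P₂ P₁ P₃) ^ 2 + Real.cos (∠ P₁ P₂ P₃) ^ 2 + Real.cos (∠ P₁ P₃ P₂) ^ 2 =
      (a ^ 2 + a * b + b ^ 2) / (a + b) ^ 2 ∧
    Real.cos (∠ P₂ P₁ P₃) ^ 2 + Real.cos (∠ P₁ P₂ P₃) ^ 2 + Real.cos (∠ P₁ P₃ P₂) ^ 2 =
      1 - 2 * k' :=
  circumcircle_family_sum_sq_cosines_general a b hb hab k' hk' P₁ P₂ P₃ hind hC₁ hC₂ hC₃ ht₁ ht₃
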